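/- arXiv:1603.06874 — 5 statements merged into one kernel-verified Lean document; each statement's English description precedes it below -/
import Mathlib

section
/- Let R be a commutative ring, e ≥ 2 an integer, A := R[X]/(X^e), π the image of X, E a finite free A-module of rank h₁, and let 0 = F^{[0]} ⊆ F^{[1]} ⊆ ⋯ ⊆ F^{[e]} be a Pappas–Rapoport filtration of rank d₁ on E, with 0 < d₁ < h₁. For 1 ≤ j ≤ e set F^{[e+j]} := {x ∈ E : π^j·x ∈ F^{[e−j]}}. Then for every 1 ≤ j ≤ e: (i) E[π^j] ⊆ F^{[e+j]}; (ii) π^j·F^{[e+j]} = F^{[e−j]}; (iii) multiplication by π^j induces an R-module isomorphism F^{[e+j]}/E[π^j] ≅ F^{[e−j]}; in other words there is a short exact sequence of R-modules 0 → E[π^j] → F^{[e+j]} → F^{[e−j]} → 0 where the second map is multiplication by π^j. -/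
/-- The ring `A = R[X]/(X^e)`. -/
abbrev TruncPoly (R : Type*) [CommRing R] (e : ℕ) : Type _ :=
  Polynomial R ⧸ Ideal.span {(Polynomial.X : Polynomial R) ^ e}

/-- The image `π` of `X` in `A = R[X]/(X^e)`. -/
noncomputable def piX (R : Type*) [CommRing R] (e : ℕ) : TruncPoly R e :=
  Ideal.Quotient.mk _ Polynomial.X

/-- Multiplication by `π^k`, as an `R`-linear endomorphism of a module over `R[X]/(X^e)`. -/
noncomputable def mulPi (R : Type*) [CommRing R] (e : ℕ)
    (E : Type*) [AddCommGroup E] [Module (TruncPoly R e) E] [Module R E]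
    [IsScalarTower R (TruncPoly R e) E] (k : ℕ) : E →ₗ[R] E :=
  (LinearMap.lsmul (TruncPoly R e) E (piX R e ^ k)).restrictScalars R

/-- A Pappas–Rapoport filtration of rank `d₁` on a module `E` over `A = R[X]/(X^e)`:
a chain of `R`-submodules `0 = F^{[0]} ⊆ F^{[1]} ⊆ ⋯ ⊆ F^{[e]}` of `E` such that each
`F^{[j]}` is an `R`-module direct summand of `E`, each quotient `F^{[j]}/F^{[j-1]}` is a
finite free `R`-module of rank `d₁`, and `π·F^{[j]} ⊆ F^{[j-1]}` for `1 ≤ j ≤ e`. -/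
def IsPRFiltration (R : Type*) [CommRing R] (e : ℕ)
    (E : Type*) [AddCommGroup E] [Module (TruncPoly R e) E] [Module R E]
    [IsScalarTower R (TruncPoly R e) E] (d₁ : ℕ) (F : ℕ → Submodule R E) : Prop :=
  F 0 = ⊥ ∧
  (∀ j < e, F j ≤ F (j + 1)) ∧
  (∀ j ≤ e, ∃ q : Submodule R E, IsCompl (F j) q) ∧
  (∀ j < e,
    Module.Finite R (↥(F (j + 1)) ⧸ (F j).comap (F (j + 1)).subtype) ∧
    Module.Free R (↥(F (j + 1)) ⧸ (F j).comap (F (j + 1)).subtype) ∧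
    Module.finrank R (↥(F (j + 1)) ⧸ (F j).comap (F (j + 1)).subtype) = d₁) ∧
  (∀ j < e, ∀ x ∈ F (j + 1), piX R e • x ∈ F j)

/-- The member `F^{[e+j]} := {x ∈ E : π^j·x ∈ F^{[e-j]}}` of the extended
(dual) Pappas–Rapoport filtration. -/
noncomputable def PRext (R : Type*) [CommRing R] (e : ℕ)
    (E : Type*) [AddCommGroup E] [Module (TruncPoly R e) E] [Module R E]
    [IsScalarTower R (TruncPoly R e) E] (F : ℕ → Submodule R E) (j : ℕ) : Submodule R E :=
  (F (e - j)).comap (mulPi R e E j)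

/-- The submodule `F'^{[j]} := {x ∈ E : π·x ∈ F^{[j]}}`. -/
noncomputable def PRdiv (R : Type*) [CommRing R] (e : ℕ)
    (E : Type*) [AddCommGroup E] [Module (TruncPoly R e) E] [Module R E]
    [IsScalarTower R (TruncPoly R e) E] (F : ℕ → Submodule R E) (j : ℕ) : Submodule R E :=
  (F j).comap (mulPi R e E 1)

/-!
Over `A = R[X]/(X^e)` the annihilator of `π^m` is `π^(e-m) A`, because `X^m` is a
non-zero-divisor in `R[X]`; coordinatewise in a basis, the same holds in a free `A`-module:
`E[π^m] = π^(e-m) E`. Since `F^{[e-j]}` is killed by `π^(e-j)`, it lies in `π^j E`, so every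
element of `F^{[e-j]}` is `π^j x` for some `x`, which then lies in `F^{[e+j]}` by definition.
This gives `π^j F^{[e+j]} = F^{[e-j]}`, and the isomorphism is the first isomorphism theorem
for multiplication by `π^j` restricted to `F^{[e+j]}`.
-/

namespace LinearMap

variable {R M N : Type*} [CommRing R] [AddCommGroup M] [AddCommGroup N] [Module R M]
  [Module R N]

theorem exists_quotEquiv_of_map_eq {f : M →ₗ[R] N} {P : Submodule R M} {Q : Submodule R N}
    (h : P.map f = Q) :
    ∃ φ : (P ⧸ (ker f).comap P.subtype) ≃ₗ[R] Q,
      ∀ x : P, (φ (Submodule.Quotient.mk x) : N) = f x :=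
  ⟨(Submodule.quotEquivOfEq _ _ (ker_domRestrict P f).symm).trans
      ((f.domRestrict P).quotKerEquivRange.trans
        (LinearEquiv.ofEq _ _ ((range_domRestrict P f).trans h))),
    fun _ => rfl⟩

end LinearMap

section TruncPoly

variable {R : Type*} [CommRing R] {e : ℕ}

theorem piX_pow_self : piX R e ^ e = 0 := by
  rw [piX, ← map_pow, Ideal.Quotient.eq_zero_iff_mem]
  exact Ideal.subset_span rfl

theorem piX_pow_mul_eq_zero_iff {m : ℕ} (hm : m ≤ e) {a : TruncPoly R e} :
    piX R e ^ m * a = 0 ↔ piX R e ^ (e - m) ∣ a := by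
  constructor
  · obtain ⟨f, rfl⟩ := Ideal.Quotient.mk_surjective a
    rw [piX, ← map_pow, ← map_mul, Ideal.Quotient.eq_zero_iff_mem, Ideal.mem_span_singleton]
    rintro ⟨g, hg⟩
    rw [← Nat.add_sub_cancel' hm, pow_add, mul_assoc] at hg
    rw [(Polynomial.monic_X_pow m).isRegular.left hg, map_mul, map_pow]
    exact dvd_mul_right _ _
  · rintro ⟨d, rfl⟩
    rw [← mul_assoc, ← pow_add, Nat.add_sub_cancel' hm, piX_pow_self, zero_mul]

variable {E : Type*} [AddCommGroup E] [Module (TruncPoly R e) E] [Module R E]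
  [IsScalarTower R (TruncPoly R e) E]

theorem mulPi_apply (k : ℕ) (x : E) : mulPi R e E k x = piX R e ^ k • x := rfl

theorem ker_mulPi_eq_range [Module.Free (TruncPoly R e) E] {m : ℕ} (hm : m ≤ e) :
    LinearMap.ker (mulPi R e E m) = LinearMap.range (mulPi R e E (e - m)) := by
  refine le_antisymm (fun y hy => ?_) ?_
  · let b := Module.Free.chooseBasis (TruncPoly R e) E
    have hdvd : ∀ i, piX R e ^ (e - m) ∣ b.repr y i := fun i =>
      (piX_pow_mul_eq_zero_iff hm).mp (by
        simpa [mulPi_apply] using congrArg (b.repr · i) (LinearMap.mem_ker.mp hy))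
    choose d hd using hdvd
    refine ⟨∑ i ∈ (b.repr y).support, d i • b i, ?_⟩
    conv_rhs => rw [← b.linearCombination_repr y]
    simp only [mulPi_apply, Finset.smul_sum, smul_smul, ← hd, Finsupp.linearCombination_apply,
      Finsupp.sum]
  · rintro _ ⟨x, rfl⟩
    rw [LinearMap.mem_ker, mulPi_apply, mulPi_apply, smul_smul, ← pow_add,
      Nat.add_sub_cancel' hm, piX_pow_self]
    exact zero_smul (TruncPoly R e) x

theorem ker_mulPi_le_PRext (F : ℕ → Submodule R E) (j : ℕ) :
    LinearMap.ker (mulPi R e E j) ≤ PRext R e E F j := fun x hx => by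
  rw [PRext, Submodule.mem_comap, LinearMap.mem_ker.mp hx]
  exact Submodule.zero_mem _

namespace IsPRFiltration

variable {d₁ : ℕ} {F : ℕ → Submodule R E}

theorem le_ker_mulPi (hF : IsPRFiltration R e E d₁ F) {k : ℕ} (hk : k ≤ e) :
    F k ≤ LinearMap.ker (mulPi R e E k) := by
  induction k with
  | zero => simp [hF.1]
  | succ k ih =>
    intro x hx
    rw [LinearMap.mem_ker, mulPi_apply, pow_succ, mul_smul]
    exact ih (by omega) (hF.2.2.2.2 k (by omega) x hx)

theorem map_mulPi_PRext [Module.Free (TruncPoly R e) E] (hF : IsPRFiltration R e E d₁ F)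
    {j : ℕ} (hj : j ≤ e) :
    Submodule.map (mulPi R e E j) (PRext R e E F j) = F (e - j) := by
  refine le_antisymm (Submodule.map_comap_le _ _) fun y hy => ?_
  have hy' := hF.le_ker_mulPi (Nat.sub_le e j) hy
  rw [ker_mulPi_eq_range (Nat.sub_le e j), Nat.sub_sub_self hj] at hy'
  obtain ⟨x, rfl⟩ := hy'
  exact ⟨x, hy, rfl⟩

end IsPRFiltration

end TruncPoly

theorem pappas_rapoport_dual_filtration_pi_power_general
    (R : Type*) [CommRing R] (e : ℕ) (d₁ : ℕ)
    (E : Type*) [AddCommGroup E] [Module (TruncPoly R e) E] [Module R E]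
    [IsScalarTower R (TruncPoly R e) E]
    [Module.Free (TruncPoly R e) E]
    (F : ℕ → Submodule R E) (hF : IsPRFiltration R e E d₁ F)
    (j : ℕ) (hje : j ≤ e) :
    LinearMap.ker (mulPi R e E j) ≤ PRext R e E F j ∧
    Submodule.map (mulPi R e E j) (PRext R e E F j) = F (e - j) ∧
    ∃ φ : (↥(PRext R e E F j) ⧸
        (LinearMap.ker (mulPi R e E j)).comap (PRext R e E F j).subtype) ≃ₗ[R] F (e - j),
      ∀ x : PRext R e E F j,
        (φ (Submodule.Quotient.mk x) : E) = piX R e ^ j • (x : E) := by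
  have hmap := hF.map_mulPi_PRext hje
  exact ⟨ker_mulPi_le_PRext F j, hmap, LinearMap.exists_quotEquiv_of_map_eq hmap⟩

/-- **Multiplication by `π^j` on the dual Pappas–Rapoport filtration.**
With `F^{[e+j]} := {x ∈ E : π^j·x ∈ F^{[e-j]}}`, for every `1 ≤ j ≤ e`:
(i) `E[π^j] ⊆ F^{[e+j]}`;
(ii) `π^j·F^{[e+j]} = F^{[e-j]}`;
(iii) multiplication by `π^j` induces an `R`-module isomorphism `F^{[e+j]}/E[π^j] ≅ F^{[e-j]}`;
equivalently, `0 → E[π^j] → F^{[e+j]} → F^{[e-j]} → 0` is a short exact sequence, the second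
map being multiplication by `π^j`. -/
theorem pappas_rapoport_dual_filtration_pi_power
    (R : Type*) [CommRing R] (e : ℕ) (he : 2 ≤ e) (h₁ d₁ : ℕ)
    (hd : 0 < d₁) (hdh : d₁ < h₁)
    (E : Type*) [AddCommGroup E] [Module (TruncPoly R e) E] [Module R E]
    [IsScalarTower R (TruncPoly R e) E]
    [Module.Finite (TruncPoly R e) E] [Module.Free (TruncPoly R e) E]
    (hrank : Module.finrank (TruncPoly R e) E = h₁)
    (F : ℕ → Submodule R E) (hF : IsPRFiltration R e E d₁ F)
    (j : ℕ) (hj1 : 1 ≤ j) (hje : j ≤ e) :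
    LinearMap.ker (mulPi R e E j) ≤ PRext R e E F j ∧
    Submodule.map (mulPi R e E j) (PRext R e E F j) = F (e - j) ∧
    ∃ φ : (↥(PRext R e E F j) ⧸
        (LinearMap.ker (mulPi R e E j)).comap (PRext R e E F j).subtype) ≃ₗ[R] F (e - j),
      ∀ x : PRext R e E F j,
        (φ (Submodule.Quotient.mk x) : E) = piX R e ^ j • (x : E) :=
  pappas_rapoport_dual_filtration_pi_power_general R e d₁ E F hF j hje
end

section
/- Let R be a commutative local ring, e ≥ 2 an integer, A := R[X]/(X^e), π the image of X, E a finite free A-module of rank h₁, and let 0 = F^{[0]} ⊆ F^{[1]} ⊆ ⋯ ⊆ F^{[e]} be a Pappas–Rapoport filtration of rank d₁ on E, with 0 < d₁ < h₁. For 0 ≤ j ≤ e−1 define F'^{[j]} := {x ∈ E : π·x ∈ F^{[j]}}. Then for every 0 ≤ j ≤ e−1: (i) F^{[j+1]} ⊆ F'^{[j]} and π·F'^{[j]} = F^{[j]}; (ii) F'^{[j]} is a direct summand of E as an R-module and is a finite free R-module of rank h₁ + j·d₁. -/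
/-!
Since `F^{[j]}` is killed by `π^j` with `j ≤ e - 1`, and `E[π^{e-1}] = πE` for a free
`A`-module, `F^{[j]}` lies in `πE`; hence `π` maps `F'^{[j]}` onto `F^{[j]}` and induces
`E ⧸ F'^{[j]} ≃ πE ⧸ F^{[j]}`. If `b` is an `A`-basis of `E`, the `π^m • b i` with `1 ≤ m < e`
form an `R`-basis of `πE`, so `πE` is free of rank `(e-1)h₁`. As `F^{[j]}` is a direct summand
of `E`, it is one of `πE`, so `πE ⧸ F^{[j]}` is finite projective, hence free over the local
ring `R`, of rank `(e-1)h₁ - j d₁`. Therefore `F'^{[j]}` splits off `E`, and its rank is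
`e h₁ - ((e-1)h₁ - j d₁) = h₁ + j d₁`.
-/

open Module

namespace Submodule

variable {R M N : Type*} [CommRing R] [AddCommGroup M] [Module R M] [AddCommGroup N] [Module R N]

theorem exists_isCompl_of_projective_quotient (p : Submodule R M) [Projective R (M ⧸ p)] :
    ∃ q : Submodule R M, IsCompl p q := by
  obtain ⟨s, hs⟩ := p.mkQ.exists_rightInverse_of_surjective p.range_mkQ
  have hproj : ∀ x, x - s (p.mkQ x) ∈ p := fun x => by
    rw [← Quotient.mk_eq_zero, ← mkQ_apply, map_sub, ← LinearMap.comp_apply, hs,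
      LinearMap.id_apply, sub_self]
  refine ⟨_, LinearMap.isCompl_of_proj
    (f := (LinearMap.id - s ∘ₗ p.mkQ).codRestrict p hproj) fun x => ?_⟩
  ext
  simp [(Quotient.mk_eq_zero p).2 x.2]

theorem finite_of_isCompl [Module.Finite R M] {p q : Submodule R M} (h : IsCompl p q) :
    Module.Finite R p :=
  .of_surjective _ (projectionOnto_surjective h)

theorem free_of_isCompl [IsLocalRing R] [Module.Finite R M] [Projective R M]
    {p q : Submodule R M} (h : IsCompl p q) : Free R p :=
  have := finite_of_isCompl h
  have : Projective R p := .of_split p.subtype _ (projectionOnto_comp_subtype h)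
  free_of_flat_of_isLocalRing

theorem finrank_add_finrank_of_isCompl [Nontrivial R] {p q : Submodule R M} (h : IsCompl p q)
    [Module.Finite R p] [Free R p] [Module.Finite R q] [Free R q] :
    finrank R p + finrank R q = finrank R M := by
  rw [← (prodEquivOfIsCompl p q h).finrank_eq, finrank_prod]

theorem finite_free_finrank_of_quotient [Nontrivial R] (p : Submodule R M)
    [Module.Finite R p] [Free R p] [Module.Finite R (M ⧸ p)] [Free R (M ⧸ p)] :
    Module.Finite R M ∧ Free R M ∧ finrank R M = finrank R p + finrank R (M ⧸ p) := by
  obtain ⟨q, h⟩ := p.exists_isCompl_of_projective_quotient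
  let e := quotientEquivOfIsCompl p q h
  have : Module.Finite R q := .equiv e
  have : Free R q := .of_equiv e
  let ePQ := prodEquivOfIsCompl p q h
  exact ⟨.equiv ePQ, .of_equiv ePQ, by rw [← finrank_add_finrank_of_isCompl h, e.finrank_eq]⟩

theorem comap_isCompl_finite_free_finrank_of_surjective [IsLocalRing R]
    [Module.Finite R M] [Free R M] [Module.Finite R N] [Free R N]
    {g : M →ₗ[R] N} (hg : Function.Surjective g) {p q : Submodule R N} (h : IsCompl p q) :
    (∃ q' : Submodule R M, IsCompl (p.comap g) q') ∧ Module.Finite R (p.comap g) ∧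
      Free R (p.comap g) ∧
      finrank R (p.comap g) + finrank R N = finrank R M + finrank R p := by
  have := finite_of_isCompl h
  have := free_of_isCompl h
  have := finite_of_isCompl h.symm
  have := free_of_isCompl h.symm
  have hker : LinearMap.ker (p.mkQ ∘ₗ g) = p.comap g := by rw [LinearMap.ker_comp, ker_mkQ]
  let eQ : (M ⧸ p.comap g) ≃ₗ[R] q :=
    quotEquivOfEq _ _ hker.symm ≪≫ₗ (p.mkQ ∘ₗ g).quotKerEquivOfSurjective
      (p.mkQ_surjective.comp hg) ≪≫ₗ quotientEquivOfIsCompl p q h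
  have : Projective R (M ⧸ p.comap g) := .of_equiv' eQ.symm
  obtain ⟨q', h'⟩ := (p.comap g).exists_isCompl_of_projective_quotient
  have := finite_of_isCompl h'
  have := free_of_isCompl h'
  let e' : q' ≃ₗ[R] q := (quotientEquivOfIsCompl _ q' h').symm ≪≫ₗ eQ
  have := Module.Finite.equiv e'.symm
  have := Free.of_equiv e'.symm
  refine ⟨⟨q', h'⟩, inferInstance, inferInstance, ?_⟩
  rw [← finrank_add_finrank_of_isCompl h', ← finrank_add_finrank_of_isCompl h, e'.finrank_eq]
  ring

end Submodule

theorem Module.Basis.exists_smul_eq_of_smul_eq_zero {S M ι : Type*} [CommRing S]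
    [AddCommGroup M] [Module S M] [Fintype ι] (b : Basis ι S M) {s t : S}
    (hst : ∀ a : S, t * a = 0 → s ∣ a) {x : M} (hx : t • x = 0) : ∃ y, s • y = x := by
  choose c hc using fun i => hst (b.repr x i) (by simpa using congr(b.repr $hx i))
  refine ⟨∑ i, c i • b i, ?_⟩
  conv_rhs => rw [← b.sum_repr x]
  simp_rw [Finset.smul_sum, smul_smul, hc]

namespace TruncPoly

variable (R : Type*) [CommRing R]

theorem piX_pow_self (e : ℕ) : piX R e ^ e = 0 := by
  rw [piX, ← map_pow, Ideal.Quotient.eq_zero_iff_mem]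
  exact Ideal.subset_span rfl

theorem piX_dvd_of_pow_mul_eq_zero {k : ℕ} {a : TruncPoly R (k + 1)}
    (ha : piX R (k + 1) ^ k * a = 0) : piX R (k + 1) ∣ a := by
  obtain ⟨p, rfl⟩ := Ideal.Quotient.mk_surjective a
  obtain ⟨q, hq⟩ : (Polynomial.X : Polynomial R) ^ (k + 1) ∣ Polynomial.X ^ k * p := by
    rwa [← Ideal.mem_span_singleton, ← Ideal.Quotient.eq_zero_iff_mem, map_mul, map_pow]
  rw [pow_succ, mul_assoc] at hq
  have hp : p = Polynomial.X * q := (Polynomial.monic_X_pow k).isRegular.left hq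
  exact ⟨Ideal.Quotient.mk _ q, by rw [hp, map_mul]; rfl⟩

variable [Nontrivial R] (e : ℕ)

noncomputable def basis : Basis (Fin e) R (TruncPoly R e) :=
  (AdjoinRoot.powerBasis' (Polynomial.monic_X_pow (R := R) e)).basis.reindex
    (finCongr (by rw [AdjoinRoot.powerBasis'_dim, Polynomial.natDegree_X_pow]))

theorem basis_apply (m : Fin e) : basis R e m = piX R e ^ (m : ℕ) := by
  rw [basis]
  erw [Basis.reindex_apply, PowerBasis.coe_basis]
  rfl

instance : Free R (TruncPoly R e) := .of_basis (basis R e)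

instance : Module.Finite R (TruncPoly R e) := .of_basis (basis R e)

theorem finrank_eq : finrank R (TruncPoly R e) = e := by
  rw [finrank_eq_card_basis (basis R e), Fintype.card_fin]

instance (k : ℕ) : Nontrivial (TruncPoly R (k + 1)) :=
  nontrivial_of_finrank_pos (R := R) (by rw [finrank_eq]; omega)

end TruncPoly

namespace IsPRFiltration

variable {R : Type*} [CommRing R] {e : ℕ} {E : Type*} [AddCommGroup E]
  [Module (TruncPoly R e) E] [Module R E] [IsScalarTower R (TruncPoly R e) E]
  {d₁ : ℕ} {F : ℕ → Submodule R E}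

theorem pow_smul_eq_zero (hF : IsPRFiltration R e E d₁ F) {j : ℕ} (hj : j ≤ e) {x : E}
    (hx : x ∈ F j) : piX R e ^ j • x = 0 := by
  induction j generalizing x with
  | zero =>
    rw [hF.1, Submodule.mem_bot] at hx
    rw [hx, smul_zero]
  | succ j ih =>
    rw [pow_succ, mul_smul]
    exact ih (by omega) (hF.2.2.2.2 j hj x hx)

theorem finite_free_finrank [Nontrivial R] (hF : IsPRFiltration R e E d₁ F) {j : ℕ}
    (hj : j ≤ e) : Module.Finite R (F j) ∧ Free R (F j) ∧ finrank R (F j) = j * d₁ := by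
  induction j with
  | zero =>
    rw [hF.1]
    exact ⟨inferInstance, inferInstance, by simp⟩
  | succ j ih =>
    obtain ⟨hfin, hfree, hrank⟩ := ih (by omega)
    obtain ⟨-, hmono, -, hquot, -⟩ := hF
    obtain ⟨hquot_fin, hquot_free, hquot_rank⟩ := hquot j hj
    let eF := Submodule.comapSubtypeEquivOfLe (hmono j hj)
    have : Module.Finite R ((F j).comap (F (j + 1)).subtype) := .equiv eF.symm
    have : Free R ((F j).comap (F (j + 1)).subtype) := .of_equiv eF.symm
    obtain ⟨hfin', hfree', hrank'⟩ :=
      Submodule.finite_free_finrank_of_quotient ((F j).comap (F (j + 1)).subtype)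
    exact ⟨hfin', hfree', by rw [hrank', eF.finrank_eq, hrank, hquot_rank, Nat.succ_mul]⟩

theorem le_PRdiv (hF : IsPRFiltration R e E d₁ F) {j : ℕ} (hj : j < e) :
    F (j + 1) ≤ PRdiv R e E F j := fun x hx => by
  simpa [PRdiv, mulPi] using hF.2.2.2.2 j hj x hx

end IsPRFiltration

section FreeModule

variable (R : Type*) [CommRing R] (k : ℕ) (E : Type*) [AddCommGroup E]
  [Module (TruncPoly R (k + 1)) E] [Module R E] [IsScalarTower R (TruncPoly R (k + 1)) E]
  [Free (TruncPoly R (k + 1)) E]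

theorem mem_range_mulPi_one_of_pow_smul_eq_zero [Module.Finite (TruncPoly R (k + 1)) E] {x : E}
    (hx : piX R (k + 1) ^ k • x = 0) : x ∈ LinearMap.range (mulPi R (k + 1) E 1) := by
  obtain ⟨y, hy⟩ := (Free.chooseBasis (TruncPoly R (k + 1)) E).exists_smul_eq_of_smul_eq_zero
    (fun _ => TruncPoly.piX_dvd_of_pow_mul_eq_zero R) hx
  exact ⟨y, by simpa [mulPi] using hy⟩

theorem IsPRFiltration.le_range_mulPi_one [Module.Finite (TruncPoly R (k + 1)) E] {d₁ : ℕ}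
    {F : ℕ → Submodule R E} (hF : IsPRFiltration R (k + 1) E d₁ F) {j : ℕ} (hj : j ≤ k) :
    F j ≤ LinearMap.range (mulPi R (k + 1) E 1) := fun x hx =>
  mem_range_mulPi_one_of_pow_smul_eq_zero R k E <| by
    rw [← pow_sub_mul_pow _ hj, mul_smul, hF.pow_smul_eq_zero (by omega) hx, smul_zero]

noncomputable def piBasisFamily :
    Fin k × Free.ChooseBasisIndex (TruncPoly R (k + 1)) E → E :=
  fun p => piX R (k + 1) ^ ((p.1 : ℕ) + 1) • Free.chooseBasis (TruncPoly R (k + 1)) E p.2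

variable [Nontrivial R]

theorem linearIndependent_piBasisFamily : LinearIndependent R (piBasisFamily R k E) := by
  have hw := ((TruncPoly.basis R (k + 1)).smulTower
    (Free.chooseBasis (TruncPoly R (k + 1)) E)).linearIndependent.comp (Prod.map Fin.succ id)
    ((Fin.succ_injective _).prodMap Function.injective_id)
  convert hw using 1
  ext p
  simp [piBasisFamily, TruncPoly.basis_apply]

theorem range_mulPi_one_eq_span :
    LinearMap.range (mulPi R (k + 1) E 1) =
      Submodule.span R (Set.range (piBasisFamily R k E)) := by
  apply le_antisymm
  · rw [LinearMap.range_eq_map, ← ((TruncPoly.basis R (k + 1)).smulTower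
      (Free.chooseBasis (TruncPoly R (k + 1)) E)).span_eq,
      Submodule.map_span, Submodule.span_le]
    rintro _ ⟨_, ⟨⟨m, i⟩, rfl⟩, rfl⟩
    induction m using Fin.lastCases with
    | last =>
      simp only [SetLike.mem_coe, mulPi, LinearMap.restrictScalars_apply, LinearMap.lsmul_apply,
        Basis.smulTower_apply, TruncPoly.basis_apply, Fin.val_last, smul_smul, ← pow_add,
        add_comm 1 k, TruncPoly.piX_pow_self]
      convert (Submodule.span R (Set.range (piBasisFamily R k E))).zero_mem
      exact zero_smul (TruncPoly R (k + 1)) (Free.chooseBasis (TruncPoly R (k + 1)) E i)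
    | cast m =>
      refine Submodule.subset_span ⟨(m, i), ?_⟩
      simp [piBasisFamily, mulPi, TruncPoly.basis_apply, smul_smul, ← pow_succ]
  · rw [Submodule.span_le]
    rintro _ ⟨⟨m, i⟩, rfl⟩
    exact ⟨piX R (k + 1) ^ (m : ℕ) • Free.chooseBasis (TruncPoly R (k + 1)) E i,
      by simp [piBasisFamily, mulPi, smul_smul, ← pow_succ]⟩

variable [Module.Finite (TruncPoly R (k + 1)) E]

theorem finite_free_finrank_of_truncPoly :
    Module.Finite R E ∧ Free R E ∧
      finrank R E = (k + 1) * finrank (TruncPoly R (k + 1)) E := by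
  refine ⟨.trans (TruncPoly R (k + 1)) E, .trans (S := TruncPoly R (k + 1)), ?_⟩
  rw [← finrank_mul_finrank R (TruncPoly R (k + 1)) E, TruncPoly.finrank_eq]

theorem finite_free_finrank_range_mulPi_one :
    Module.Finite R (LinearMap.range (mulPi R (k + 1) E 1)) ∧
      Free R (LinearMap.range (mulPi R (k + 1) E 1)) ∧
      finrank R (LinearMap.range (mulPi R (k + 1) E 1)) =
        k * finrank (TruncPoly R (k + 1)) E := by
  let b := (Basis.span (linearIndependent_piBasisFamily R k E)).map
    (LinearEquiv.ofEq _ _ (range_mulPi_one_eq_span R k E).symm)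
  refine ⟨.of_basis b, .of_basis b, ?_⟩
  rw [finrank_eq_card_basis b, Fintype.card_prod, Fintype.card_fin,
    finrank_eq_card_chooseBasisIndex]

end FreeModule

theorem pappas_rapoport_pi_preimage_filtration_general
    (R : Type*) [CommRing R] [IsLocalRing R] (e : ℕ) (he : 2 ≤ e) (h₁ d₁ : ℕ)
    (E : Type*) [AddCommGroup E] [Module (TruncPoly R e) E] [Module R E]
    [IsScalarTower R (TruncPoly R e) E]
    [Module.Finite (TruncPoly R e) E] [Module.Free (TruncPoly R e) E]
    (hrank : Module.finrank (TruncPoly R e) E = h₁)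
    (F : ℕ → Submodule R E) (hF : IsPRFiltration R e E d₁ F)
    (j : ℕ) (hj : j ≤ e - 1) :
    F (j + 1) ≤ PRdiv R e E F j ∧
    Submodule.map (mulPi R e E 1) (PRdiv R e E F j) = F j ∧
    (∃ q : Submodule R E, IsCompl (PRdiv R e E F j) q) ∧
    Module.Finite R (PRdiv R e E F j) ∧ Module.Free R (PRdiv R e E F j) ∧
    Module.finrank R (PRdiv R e E F j) = h₁ + j * d₁ := by
  obtain ⟨k, rfl⟩ : ∃ k, e = k + 1 := ⟨e - 1, by omega⟩
  set T := LinearMap.range (mulPi R (k + 1) E 1)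
  have hFT : F j ≤ T := hF.le_range_mulPi_one R k E (by omega)
  obtain ⟨-, -, hFrank⟩ := hF.finite_free_finrank (j := j) (by omega)
  obtain ⟨_, _, hErank⟩ := finite_free_finrank_of_truncPoly R k E
  obtain ⟨_, _, hTrank⟩ := finite_free_finrank_range_mulPi_one R k E
  obtain ⟨q, hq⟩ := hF.2.2.1 j (by omega)
  have hPRdiv : PRdiv R (k + 1) E F j =
      ((F j).comap T.subtype).comap (mulPi R (k + 1) E 1).rangeRestrict := by
    rw [← Submodule.comap_comp, LinearMap.subtype_comp_codRestrict, PRdiv]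
  obtain ⟨hsplit, hfin, hfree, hPrank⟩ :=
    Submodule.comap_isCompl_finite_free_finrank_of_surjective (LinearMap.surjective_rangeRestrict _)
      (Submodule.isCompl_comap_subtype_of_isCompl_of_le hq hFT)
  rw [← hPRdiv] at hsplit hfin hfree hPrank
  refine ⟨hF.le_PRdiv (by omega), Submodule.map_comap_eq_of_le hFT, hsplit, hfin, hfree, ?_⟩
  rw [hTrank, hErank, (Submodule.comapSubtypeEquivOfLe hFT).finrank_eq, hFrank, hrank] at hPrank
  linarith

/-- **The submodules `F'^{[j]} = π^{-1}(F^{[j]})`.**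
Let `R` be a commutative local ring and `F^{[•]}` a Pappas–Rapoport filtration of rank `d₁`
on the finite free `A = R[X]/(X^e)`-module `E` of rank `h₁`, `0 < d₁ < h₁`, `e ≥ 2`.
For `0 ≤ j ≤ e-1`, with `F'^{[j]} := {x ∈ E : π·x ∈ F^{[j]}}`:
(i) `F^{[j+1]} ⊆ F'^{[j]}` and `π·F'^{[j]} = F^{[j]}`;
(ii) `F'^{[j]}` is an `R`-module direct summand of `E` and is finite free over `R` of rank
`h₁ + j·d₁`. -/
theorem pappas_rapoport_pi_preimage_filtration
    (R : Type*) [CommRing R] [IsLocalRing R] (e : ℕ) (he : 2 ≤ e) (h₁ d₁ : ℕ)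
    (hd : 0 < d₁) (hdh : d₁ < h₁)
    (E : Type*) [AddCommGroup E] [Module (TruncPoly R e) E] [Module R E]
    [IsScalarTower R (TruncPoly R e) E]
    [Module.Finite (TruncPoly R e) E] [Module.Free (TruncPoly R e) E]
    (hrank : Module.finrank (TruncPoly R e) E = h₁)
    (F : ℕ → Submodule R E) (hF : IsPRFiltration R e E d₁ F)
    (j : ℕ) (hj : j ≤ e - 1) :
    F (j + 1) ≤ PRdiv R e E F j ∧
    Submodule.map (mulPi R e E 1) (PRdiv R e E F j) = F j ∧
    (∃ q : Submodule R E, IsCompl (PRdiv R e E F j) q) ∧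
    Module.Finite R (PRdiv R e E F j) ∧ Module.Free R (PRdiv R e E F j) ∧
    Module.finrank R (PRdiv R e E F j) = h₁ + j * d₁ :=
  pappas_rapoport_pi_preimage_filtration_general R e he h₁ d₁ E hrank F hF j hj
end

section
/- Let R be a commutative ring, e ≥ 2 an integer, A := R[X]/(X^e), π the image of X, E a finite free A-module of rank h₁, and let 0 = F^{[0]} ⊆ F^{[1]} ⊆ ⋯ ⊆ F^{[e]} be a Pappas–Rapoport filtration of rank d₁ on E, with 0 < d₁ < h₁. For 0 ≤ j ≤ e−1 set F'^{[j]} := {x ∈ E : π·x ∈ F^{[j]}}. Then for every 2 ≤ j ≤ e: (i) multiplication by π induces a well-defined R-module isomorphism F'^{[j−1]}/F'^{[j−2]} ≅ F^{[j−1]}/F^{[j−2]}; (ii) the composition of the map M^{[j]} : F^{[j]}/F^{[j−1]} → F^{[j−1]}/F^{[j−2]} induced by multiplication by π (the j-th primitive Hasse map) with the inverse of the isomorphism in (i) equals the map F^{[j]}/F^{[j−1]} → F'^{[j−1]}/F'^{[j−2]} induced by the inclusion F^{[j]} ⊆ F'^{[j−1]}. -/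
/-!
Iterating `π·F^{[i]} ⊆ F^{[i-1]}` shows that `F^{[j-1]}` is killed by `π^{j-1}`. As `j - 1 < e`,
in a free `R[X]/(X^e)`-module such an element is divisible by `π` (coordinatewise,
`X^e ∣ X^{j-1} p` forces `X ∣ p`). Hence multiplication by `π` maps `F'^{[j-1]}` onto
`F^{[j-1]}`, and since `F'^{[j-2]}` is the preimage of `F^{[j-2]}` it induces an isomorphism of
the quotients. On `F^{[j]} ⊆ F'^{[j-1]}` this isomorphism is multiplication by `π`,
that is, the primitive Hasse map.
-/

open Polynomial Submodule

section ComapQuot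

variable {R M N : Type*} [Ring R] [AddCommGroup M] [Module R M] [AddCommGroup N] [Module R N]
  (f : M →ₗ[R] N) (U V : Submodule R N)

noncomputable def LinearMap.comapToQuot : U.comap f →ₗ[R] U ⧸ V.comap U.subtype :=
  (V.comap U.subtype).mkQ ∘ₗ f.submoduleComap U

theorem LinearMap.ker_comapToQuot :
    LinearMap.ker (f.comapToQuot U V) = (V.comap f).comap (U.comap f).subtype := by
  ext x
  simp [LinearMap.comapToQuot, LinearMap.submoduleComap]

theorem LinearMap.comapToQuot_surjective (hU : U ≤ LinearMap.range f) :
    Function.Surjective (f.comapToQuot U V) := by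
  rintro ⟨u⟩
  obtain ⟨m, hm⟩ := hU u.2
  exact ⟨⟨m, by simp [hm]⟩, congrArg (Submodule.Quotient.mk (p := V.comap U.subtype))
    (Subtype.ext hm)⟩

noncomputable def LinearMap.comapQuotEquivQuot (hU : U ≤ LinearMap.range f) :
    (U.comap f ⧸ (V.comap f).comap (U.comap f).subtype) ≃ₗ[R] U ⧸ V.comap U.subtype :=
  (quotEquivOfEq _ _ (f.ker_comapToQuot U V).symm).trans
    ((f.comapToQuot U V).quotKerEquivOfSurjective (f.comapToQuot_surjective U V hU))

@[simp]
theorem LinearMap.comapQuotEquivQuot_mk (hU : U ≤ LinearMap.range f) (x : U.comap f) :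
    f.comapQuotEquivQuot U V hU (Submodule.Quotient.mk x) =
      Submodule.Quotient.mk (f.submoduleComap U x) :=
  rfl

end ComapQuot

theorem exists_smul_eq_of_smul_eq_zero {S E : Type*} [CommRing S] [AddCommGroup E] [Module S E]
    [Module.Free S E] {a b : S} (hab : ∀ c : S, b * c = 0 → ∃ g, a * g = c)
    {y : E} (hy : b • y = 0) : ∃ x, a • x = y := by
  let B := Module.Free.chooseBasis S E
  have hcoeff : ∀ i, b * B.repr y i = 0 := fun i => by
    simpa using congrArg (B.repr · i) hy
  suffices y ∈ LinearMap.range (LinearMap.lsmul S E a) from this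
  rw [← B.linearCombination_repr y, Finsupp.linearCombination_apply]
  refine Submodule.finsuppSum_mem _ _ _ _ fun i _ => ?_
  obtain ⟨g, hg⟩ := hab _ (hcoeff i)
  exact ⟨g • B i, by rw [LinearMap.lsmul_apply, smul_smul, hg]⟩

section PappasRapoport

variable {R : Type*} [CommRing R] {e : ℕ}

theorem exists_piX_mul_eq_of_piX_pow_mul_eq_zero {k : ℕ} (hk : k < e) {c : TruncPoly R e}
    (hc : piX R e ^ k * c = 0) : ∃ g, piX R e * g = c := by
  obtain ⟨p, rfl⟩ := Ideal.Quotient.mk_surjective c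
  have hdvd : X ^ e ∣ X ^ k * p := by
    rw [← Ideal.mem_span_singleton, ← Ideal.Quotient.eq_zero_iff_mem]
    simpa [piX] using hc
  obtain ⟨q, rfl⟩ : X ∣ p := by
    simpa [X_dvd_iff, coeff_X_pow_mul'] using X_pow_dvd_iff.mp hdvd k hk
  exact ⟨Ideal.Quotient.mk _ q, by simp [piX]⟩

variable {E : Type*} [AddCommGroup E] [Module (TruncPoly R e) E] [Module R E]
  [IsScalarTower R (TruncPoly R e) E]

theorem mulPi_one_apply (x : E) : mulPi R e E 1 x = piX R e • x := by
  simp [mulPi]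

theorem mem_PRdiv {F : ℕ → Submodule R E} {j : ℕ} {x : E} :
    x ∈ PRdiv R e E F j ↔ piX R e • x ∈ F j := by
  rw [PRdiv, mem_comap, mulPi_one_apply]

namespace IsPRFiltration

variable {d₁ : ℕ} {F : ℕ → Submodule R E}

theorem piX_smul_mem (hF : IsPRFiltration R e E d₁ F) {j : ℕ} (hj : j < e) {x : E}
    (hx : x ∈ F (j + 1)) : piX R e • x ∈ F j :=
  hF.2.2.2.2 j hj x hx

theorem piX_pow_smul_eq_zero (hF : IsPRFiltration R e E d₁ F) {k : ℕ} (hk : k ≤ e) {x : E}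
    (hx : x ∈ F k) : piX R e ^ k • x = 0 := by
  induction k generalizing x with
  | zero => simpa [hF.1] using hx
  | succ k ih => rw [pow_succ, mul_smul]; exact ih (by omega) (hF.piX_smul_mem (by omega) hx)

theorem le_range_mulPi_one_s8 [Module.Free (TruncPoly R e) E] (hF : IsPRFiltration R e E d₁ F)
    {k : ℕ} (hk : k < e) : F k ≤ LinearMap.range (mulPi R e E 1) := fun y hy => by
  obtain ⟨x, hx⟩ := exists_smul_eq_of_smul_eq_zero
    (fun _ => exists_piX_mul_eq_of_piX_pow_mul_eq_zero hk) (hF.piX_pow_smul_eq_zero hk.le hy)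
  exact ⟨x, (mulPi_one_apply x).trans hx⟩

end IsPRFiltration

end PappasRapoport

theorem primitive_hasse_map_via_preimage_filtration_general
    (R : Type*) [CommRing R] (e : ℕ) (d₁ : ℕ)
    (E : Type*) [AddCommGroup E] [Module (TruncPoly R e) E] [Module R E]
    [IsScalarTower R (TruncPoly R e) E]
    [Module.Free (TruncPoly R e) E]
    (F : ℕ → Submodule R E) (hF : IsPRFiltration R e E d₁ F)
    (j : ℕ) (hj1 : 2 ≤ j) (hje : j ≤ e) :
    ∃ φ : (↥(PRdiv R e E F (j - 1)) ⧸
          (PRdiv R e E F (j - 2)).comap (PRdiv R e E F (j - 1)).subtype) ≃ₗ[R]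
        (↥(F (j - 1)) ⧸ (F (j - 2)).comap (F (j - 1)).subtype),
      (∀ (x : PRdiv R e E F (j - 1)) (hx : piX R e • (x : E) ∈ F (j - 1)),
        φ (Submodule.Quotient.mk x) =
          Submodule.Quotient.mk (⟨piX R e • (x : E), hx⟩ : F (j - 1))) ∧
      ∀ (M : (↥(F j) ⧸ (F (j - 1)).comap (F j).subtype) →ₗ[R]
          (↥(F (j - 1)) ⧸ (F (j - 2)).comap (F (j - 1)).subtype)),
        (∀ (x : F j) (hx : piX R e • (x : E) ∈ F (j - 1)),
          M (Submodule.Quotient.mk x) =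
            Submodule.Quotient.mk (⟨piX R e • (x : E), hx⟩ : F (j - 1))) →
        ∀ (ι : (↥(F j) ⧸ (F (j - 1)).comap (F j).subtype) →ₗ[R]
            (↥(PRdiv R e E F (j - 1)) ⧸
              (PRdiv R e E F (j - 2)).comap (PRdiv R e E F (j - 1)).subtype)),
          (∀ (x : F j) (hx : (x : E) ∈ PRdiv R e E F (j - 1)),
            ι (Submodule.Quotient.mk x) =
              Submodule.Quotient.mk (⟨(x : E), hx⟩ : PRdiv R e E F (j - 1))) →
          ∀ z, φ (ι z) = M z := by
  let φ := (mulPi R e E 1).comapQuotEquivQuot (F (j - 1)) (F (j - 2))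
    (hF.le_range_mulPi_one_s8 (by omega))
  have hφ : ∀ (x : PRdiv R e E F (j - 1)) (hx : piX R e • (x : E) ∈ F (j - 1)),
      φ (Submodule.Quotient.mk x) = Submodule.Quotient.mk ⟨piX R e • (x : E), hx⟩ :=
    fun x _ => (LinearMap.comapQuotEquivQuot_mk _ _ _ _ x).trans
      (congrArg _ (Subtype.ext (mulPi_one_apply (x : E))))
  refine ⟨φ, hφ, fun M hM ι hι z => ?_⟩
  obtain ⟨x, rfl⟩ := Submodule.Quotient.mk_surjective _ z
  have hx : piX R e • (x : E) ∈ F (j - 1) :=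
    hF.piX_smul_mem (by omega) (by rw [Nat.sub_add_cancel (by omega)]; exact x.2)
  rw [hι x (mem_PRdiv.mpr hx), hM x hx]
  exact hφ _ hx

/-- **The primitive Hasse map via the filtration `F'^{[•]}`.**
For `2 ≤ j ≤ e`, with `F'^{[j]} := {x ∈ E : π·x ∈ F^{[j]}}`:
(i) multiplication by `π` induces an `R`-module isomorphism
`φ : F'^{[j-1]}/F'^{[j-2]} ≅ F^{[j-1]}/F^{[j-2]}`;
(ii) the primitive Hasse map `M^{[j]} : F^{[j]}/F^{[j-1]} → F^{[j-1]}/F^{[j-2]}` (induced by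
multiplication by `π`) composed with `φ⁻¹` is the map `F^{[j]}/F^{[j-1]} → F'^{[j-1]}/F'^{[j-2]}`
induced by the inclusion `F^{[j]} ⊆ F'^{[j-1]}`; equivalently `φ ∘ ι = M^{[j]}` where `ι` is
the inclusion-induced map. -/
theorem primitive_hasse_map_via_preimage_filtration
    (R : Type*) [CommRing R] (e : ℕ) (he : 2 ≤ e) (h₁ d₁ : ℕ)
    (hd : 0 < d₁) (hdh : d₁ < h₁)
    (E : Type*) [AddCommGroup E] [Module (TruncPoly R e) E] [Module R E]
    [IsScalarTower R (TruncPoly R e) E]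
    [Module.Finite (TruncPoly R e) E] [Module.Free (TruncPoly R e) E]
    (hrank : Module.finrank (TruncPoly R e) E = h₁)
    (F : ℕ → Submodule R E) (hF : IsPRFiltration R e E d₁ F)
    (j : ℕ) (hj1 : 2 ≤ j) (hje : j ≤ e) :
    ∃ φ : (↥(PRdiv R e E F (j - 1)) ⧸
          (PRdiv R e E F (j - 2)).comap (PRdiv R e E F (j - 1)).subtype) ≃ₗ[R]
        (↥(F (j - 1)) ⧸ (F (j - 2)).comap (F (j - 1)).subtype),
      (∀ (x : PRdiv R e E F (j - 1)) (hx : piX R e • (x : E) ∈ F (j - 1)),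
        φ (Submodule.Quotient.mk x) =
          Submodule.Quotient.mk (⟨piX R e • (x : E), hx⟩ : F (j - 1))) ∧
      ∀ (M : (↥(F j) ⧸ (F (j - 1)).comap (F j).subtype) →ₗ[R]
          (↥(F (j - 1)) ⧸ (F (j - 2)).comap (F (j - 1)).subtype)),
        (∀ (x : F j) (hx : piX R e • (x : E) ∈ F (j - 1)),
          M (Submodule.Quotient.mk x) =
            Submodule.Quotient.mk (⟨piX R e • (x : E), hx⟩ : F (j - 1))) →
        ∀ (ι : (↥(F j) ⧸ (F (j - 1)).comap (F j).subtype) →ₗ[R]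
            (↥(PRdiv R e E F (j - 1)) ⧸
              (PRdiv R e E F (j - 2)).comap (PRdiv R e E F (j - 1)).subtype)),
          (∀ (x : F j) (hx : (x : E) ∈ PRdiv R e E F (j - 1)),
            ι (Submodule.Quotient.mk x) =
              Submodule.Quotient.mk (⟨(x : E), hx⟩ : PRdiv R e E F (j - 1))) →
          ∀ z, φ (ι z) = M z :=
  primitive_hasse_map_via_preimage_filtration_general R e d₁ E F hF j hj1 hje
end

section
/- Let R be a commutative local ring, e ≥ 2 an integer, A := R[X]/(X^e), π the image of X, E a finite free A-module of rank h₁, and let 0 = F^{[0]} ⊆ F^{[1]} ⊆ ⋯ ⊆ F^{[e]} be a Pappas–Rapoport filtration of rank d₁ on E, with 0 < d₁ < h₁. For 1 ≤ j ≤ e set F^{[e+j]} := {x ∈ E : π^j·x ∈ F^{[e−j]}}. Fix 2 ≤ j ≤ e. Multiplication by π induces well-defined R-linear maps μ : F^{[j]}/F^{[j−1]} → F^{[j−1]}/F^{[j−2]} between finite free R-modules of rank d₁, and μ^D : F^{[2e+2−j]}/F^{[2e+1−j]} → F^{[2e+1−j]}/F^{[2e−j]} between finite free R-modules of rank h₁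 − d₁. Then for any choice of R-bases of these four free modules, the determinants of the representing matrices of μ and μ^D differ by multiplication by a unit of R; in particular they generate the same ideal of R. (This is the compatibility of the primitive Hasse invariants with duality: m^{[j]}(G) = m^{[j]}(G^D) under the canonical isomorphism of determinant lines.) -/
open LinearMap Submodule

theorem IsLocalRing.associated_of_dvd_dvd {R : Type*} [CommRing R] [IsLocalRing R] {a b : R}
    (hab : a ∣ b) (hba : b ∣ a) : Associated a b := by
  obtain ⟨x, rfl⟩ := hab
  obtain ⟨y, hy⟩ := hba
  by_cases hx : IsUnit x
  · exact ⟨hx.unit, rfl⟩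
  · have hxy : IsUnit (1 - x * y) :=
      IsLocalRing.isUnit_one_sub_self_of_mem_nonunits _ fun h => hx (isUnit_of_mul_isUnit_left h)
    have ha : a = 0 := hxy.mul_left_eq_zero.mp (by linear_combination hy)
    simp [ha]

section Fitting

variable {R V W : Type*} [CommRing R] [AddCommGroup V] [Module R V] [AddCommGroup W] [Module R W]

theorem LinearMap.det_dvd_det_of_range_le [Module.Projective R V] {f g : V →ₗ[R] V}
    (h : range g ≤ range f) : LinearMap.det f ∣ LinearMap.det g := by
  obtain ⟨s, hs⟩ := Module.projective_lifting_property f.rangeRestrict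
    (g.codRestrict _ fun v => h ⟨v, rfl⟩) f.surjective_rangeRestrict
  have hg : g = f ∘ₗ s := by
    ext v
    simpa using congr(((↑) : range f → V) ($hs.symm v))
  exact ⟨LinearMap.det s, by rw [hg, det_comp]⟩

variable [Module.Free R V] [Module.Finite R V] [Module.Free R W] [Module.Finite R W]

theorem LinearMap.det_dvd_det_of_quotient_range_equiv (f : V →ₗ[R] V) (g : W →ₗ[R] W)
    (Φ : (V ⧸ range f) ≃ₗ[R] (W ⧸ range g)) : LinearMap.det f ∣ LinearMap.det g := by
  set q := Φ.symm.toLinearMap ∘ₗ (range g).mkQ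
  obtain ⟨Q, hQ⟩ := Module.projective_lifting_property (range f).mkQ q (range f).mkQ_surjective
  obtain ⟨P, hP⟩ := Module.projective_lifting_property q (range f).mkQ
    (Φ.symm.surjective.comp (range g).mkQ_surjective)
  -- `S (v, w) = (v - Q w, w)` and `T (v, w) = (v, w - P v)`
  let S : (V × W) ≃ₗ[R] (V × W) := (LinearEquiv.prodComm R V W).trans
    (((LinearEquiv.refl R W).skewProd (LinearEquiv.refl R V) (-Q)).trans
      (LinearEquiv.prodComm R W V))
  let T : (V × W) ≃ₗ[R] (V × W) := (LinearEquiv.refl R V).skewProd (LinearEquiv.refl R W) (-P)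
  have hle :
      range (T.toLinearMap ∘ₗ id.prodMap g) ≤ range (S.toLinearMap ∘ₗ f.prodMap id) := by
    rintro _ ⟨⟨v, w⟩, rfl⟩
    obtain ⟨u, hu⟩ : v + Q (g w - P v) ∈ range f := by
      rw [← ker_mkQ (range f), mem_ker, map_add, ← LinearMap.comp_apply, hQ, map_sub,
        ← LinearMap.comp_apply q P, hP]
      simp [q]
    exact ⟨(u, g w - P v),
      Prod.ext (by simp [S, T, hu, -map_sub]) (by simp [S, T, sub_eq_add_neg])⟩
  simpa [det_comp, det_prodMap, S.isUnit_det'.mul_left_dvd, T.isUnit_det'.dvd_mul_left]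
    using det_dvd_det_of_range_le hle

theorem LinearMap.associated_det_of_quotient_range_equiv [IsLocalRing R] (f : V →ₗ[R] V)
    (g : W →ₗ[R] W) (Φ : (V ⧸ range f) ≃ₗ[R] (W ⧸ range g)) :
    Associated (LinearMap.det f) (LinearMap.det g) :=
  IsLocalRing.associated_of_dvd_dvd (det_dvd_det_of_quotient_range_equiv f g Φ)
    (det_dvd_det_of_quotient_range_equiv g f Φ.symm)

end Fitting

section Basis

variable {R ι κ V₁ V₂ W₁ W₂ : Type*} [CommRing R] [Fintype ι] [DecidableEq ι] [Fintype κ]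
  [DecidableEq κ] [AddCommGroup V₁] [Module R V₁] [AddCommGroup V₂] [Module R V₂]
  [AddCommGroup W₁] [Module R W₁] [AddCommGroup W₂] [Module R W₂]

theorem LinearMap.toMatrix_eq_toMatrix_comp_basis_equiv (b₁ : Module.Basis ι R V₁)
    (b₂ : Module.Basis ι R V₂) (f : V₁ →ₗ[R] V₂) :
    toMatrix b₁ b₂ f = toMatrix b₂ b₂ (f ∘ₗ (b₂.equiv b₁ (Equiv.refl ι)).toLinearMap) := by
  ext i k
  simp [toMatrix_apply]

theorem LinearMap.associated_det_toMatrix_of_quotient_range_equiv [IsLocalRing R]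
    (b₁ : Module.Basis ι R V₁) (b₂ : Module.Basis ι R V₂) (b₃ : Module.Basis κ R W₁)
    (b₄ : Module.Basis κ R W₂) (f : V₁ →ₗ[R] V₂) (g : W₁ →ₗ[R] W₂)
    (Φ : (V₂ ⧸ range f) ≃ₗ[R] (W₂ ⧸ range g)) :
    Associated (toMatrix b₁ b₂ f).det (toMatrix b₃ b₄ g).det := by
  have := Module.Free.of_basis b₂
  have := Module.Free.of_basis b₄
  have := Module.Finite.of_basis b₂
  have := Module.Finite.of_basis b₄
  rw [toMatrix_eq_toMatrix_comp_basis_equiv, toMatrix_eq_toMatrix_comp_basis_equiv b₃,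
    det_toMatrix, det_toMatrix]
  exact associated_det_of_quotient_range_equiv _ _
    ((quotEquivOfEq _ _ (range_comp_of_range_eq_top f (LinearEquiv.range _))).trans
      (Φ.trans (quotEquivOfEq _ _ (range_comp_of_range_eq_top g (LinearEquiv.range _)).symm)))

end Basis

section QuotientEquiv

variable {R M N : Type*} [CommRing R] [AddCommGroup M] [Module R M] [AddCommGroup N] [Module R N]

noncomputable def Submodule.quotientComapEquivOfSurjective (f : M →ₗ[R] N)
    (hf : Function.Surjective f) (p : Submodule R N) : (M ⧸ p.comap f) ≃ₗ[R] (N ⧸ p) :=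
  (quotEquivOfEq _ _ (by rw [ker_comp, ker_mkQ])).trans
    ((p.mkQ ∘ₗ f).quotKerEquivOfSurjective (p.mkQ_surjective.comp hf))

variable {X Y Z : Submodule R M} {φ : M →ₗ[R] M}
  {ν : (Z ⧸ Y.comap Z.subtype) →ₗ[R] (Y ⧸ X.comap Y.subtype)}

theorem Submodule.range_eq_map_mkQ_comap_sup_map (hφ : ∀ z ∈ Z, φ z ∈ Y)
    (hν : ∀ (z : Z) (h : φ z ∈ Y), ν (Quotient.mk z) = Quotient.mk ⟨φ z, h⟩) :
    range ν = ((X ⊔ Z.map φ).comap Y.subtype).map (X.comap Y.subtype).mkQ := by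
  apply le_antisymm
  · rintro _ ⟨c, rfl⟩
    obtain ⟨z, rfl⟩ := Quotient.mk_surjective _ c
    rw [hν z (hφ z z.2)]
    exact ⟨_, mem_sup_right (mem_map_of_mem z.2), rfl⟩
  · rintro _ ⟨y, hy, rfl⟩
    obtain ⟨a, ha, _, ⟨z, hz, rfl⟩, hsum⟩ := mem_sup.mp hy
    refine ⟨Quotient.mk ⟨z, hz⟩, ?_⟩
    rw [coe_subtype] at hsum
    rw [hν ⟨z, hz⟩ (hφ z hz), mkQ_apply, Quotient.eq, mem_comap, coe_subtype,
      AddSubgroupClass.coe_sub, ← hsum, sub_add_cancel_right]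
    exact neg_mem ha

noncomputable def Submodule.quotientRangeInducedEquiv (hφ : ∀ z ∈ Z, φ z ∈ Y)
    (hν : ∀ (z : Z) (h : φ z ∈ Y), ν (Quotient.mk z) = Quotient.mk ⟨φ z, h⟩) :
    ((Y ⧸ X.comap Y.subtype) ⧸ range ν) ≃ₗ[R] (Y ⧸ (X ⊔ Z.map φ).comap Y.subtype) :=
  (quotEquivOfEq _ _ (range_eq_map_mkQ_comap_sup_map hφ hν)).trans
    (quotientQuotientEquivQuotient _ _ (comap_mono le_sup_left))

end QuotientEquiv

section TruncPoly

variable {R : Type*} [CommRing R] {e : ℕ}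

local notation "π" => piX R e

theorem piX_pow_eq_zero : π ^ e = 0 := by
  rw [piX, ← map_pow, Ideal.Quotient.eq_zero_iff_mem]
  exact Ideal.subset_span rfl

theorem piX_pow_dvd_of_piX_pow_mul_eq_zero {k m : ℕ} (hkm : k + m = e) {c : TruncPoly R e}
    (hc : π ^ m * c = 0) : π ^ k ∣ c := by
  obtain ⟨f, rfl⟩ := Ideal.Quotient.mk_surjective c
  rw [piX, ← map_pow, ← map_mul, Ideal.Quotient.eq_zero_iff_mem, Ideal.mem_span_singleton,
    ← hkm, pow_add, mul_comm (Polynomial.X ^ k)] at hc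
  obtain ⟨g, hg⟩ := hc
  rw [mul_assoc] at hg
  refine ⟨Ideal.Quotient.mk _ g, ?_⟩
  rw [(Polynomial.monic_X_pow m).isRegular.left hg, map_mul, map_pow, piX]

variable {E : Type*} [AddCommGroup E] [Module (TruncPoly R e) E] [Module.Free (TruncPoly R e) E]

theorem exists_piX_pow_smul_eq_of_piX_pow_smul_eq_zero {k m : ℕ} (hkm : k + m = e) {x : E}
    (hx : π ^ m • x = 0) : ∃ y : E, π ^ k • y = x := by
  let b := Module.Free.chooseBasis (TruncPoly R e) E
  have hdvd (i) : π ^ k ∣ b.repr x i :=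
    piX_pow_dvd_of_piX_pow_mul_eq_zero hkm (by simpa using congr(b.repr $hx i))
  choose d hd using hdvd
  refine ⟨(b.repr x).sum fun i _ => d i • b i, ?_⟩
  conv_rhs => rw [← b.linearCombination_repr x, Finsupp.linearCombination_apply]
  rw [Finsupp.smul_sum]
  exact Finsupp.sum_congr fun i _ => by rw [smul_smul, ← hd i]

end TruncPoly

section Filtration

variable {R : Type*} [CommRing R] {e : ℕ} {E : Type*} [AddCommGroup E]
  [Module (TruncPoly R e) E] [Module R E] [IsScalarTower R (TruncPoly R e) E]
  {d₁ : ℕ} {F : ℕ → Submodule R E}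

local notation "π" => piX R e
local notation "πₗ" => DistribSMul.toLinearMap R E (piX R e)

theorem mem_PRext_iff_of_add_eq {k m : ℕ} (hkm : k + m = e) {x : E} :
    x ∈ PRext R e E F k ↔ π ^ k • x ∈ F m := by
  rw [PRext, show e - k = m by omega]
  rfl

namespace IsPRFiltration

theorem mono (hF : IsPRFiltration R e E d₁ F) {i k : ℕ} (hik : i ≤ k) (hke : k ≤ e) :
    F i ≤ F k := by
  induction k, hik using Nat.le_induction with
  | base => exact le_rfl
  | succ k _ ih => exact (ih (by omega)).trans (hF.2.1 k (by omega))

theorem pi_pow_smul_eq_zero (hF : IsPRFiltration R e E d₁ F) {k : ℕ} (hke : k ≤ e) {x : E}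
    (hx : x ∈ F k) : π ^ k • x = 0 := by
  induction k generalizing x with
  | zero => simpa [hF.1] using hx
  | succ k ih => rw [pow_succ, mul_smul, ih (by omega) (hF.2.2.2.2 k (by omega) x hx)]

theorem pi_smul_mem_PRext (hF : IsPRFiltration R e E d₁ F) {k : ℕ} (hke : k < e) {x : E}
    (hx : x ∈ PRext R e E F (k + 1)) : π • x ∈ PRext R e E F k := by
  rw [mem_PRext_iff_of_add_eq (m := e - k - 1) (by omega)] at hx
  rw [mem_PRext_iff_of_add_eq (m := e - k) (by omega), smul_smul, ← pow_succ]
  exact hF.mono (by omega) (by omega) hx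

variable [Module.Free (TruncPoly R e) E]

theorem exists_mem_PRext_pi_pow_smul_eq (hF : IsPRFiltration R e E d₁ F) {k m : ℕ}
    (hkm : k + m = e) {x : E} (hx : x ∈ F m) : ∃ y ∈ PRext R e E F k, π ^ k • y = x := by
  obtain ⟨y, rfl⟩ := exists_piX_pow_smul_eq_of_piX_pow_smul_eq_zero hkm
    (hF.pi_pow_smul_eq_zero (by omega) hx)
  exact ⟨y, (mem_PRext_iff_of_add_eq hkm).mpr hx, rfl⟩

theorem pi_pow_smul_mem_sup_iff (hF : IsPRFiltration R e E d₁ F) {j : ℕ} (hj1 : 2 ≤ j)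
    (hje : j ≤ e) {x : E} :
    π ^ (e + 1 - j) • x ∈ F (j - 2) ⊔ (F j).map πₗ ↔
      x ∈ PRext R e E F (e - j) ⊔ (PRext R e E F (e + 2 - j)).map πₗ := by
  have h₁ : π ^ (e + 1 - j) = π * π ^ (e - j) := by
    rw [← pow_succ', show e - j + 1 = e + 1 - j by omega]
  have h₂ : π ^ (e + 2 - j) = π * π * π ^ (e - j) := by
    rw [mul_assoc, ← h₁, ← pow_succ', show e + 1 - j + 1 = e + 2 - j by omega]
  constructor
  · intro h
    obtain ⟨_, ha, _, ⟨_, hg, rfl⟩, hsum⟩ := mem_sup.mp h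
    obtain ⟨y, hy, rfl⟩ := hF.exists_mem_PRext_pi_pow_smul_eq (k := e - j) (by omega) hg
    obtain ⟨w, hw, rfl⟩ := hF.exists_mem_PRext_pi_pow_smul_eq (k := e + 2 - j) (by omega) ha
    obtain ⟨v, hv⟩ : ∃ v, π ^ (j - 1) • v = x - y - π • w := by
      refine exists_piX_pow_smul_eq_of_piX_pow_smul_eq_zero (m := e + 1 - j) (by omega) ?_
      rw [smul_sub, smul_sub, ← hsum, h₁, h₂, DistribSMul.toLinearMap_apply]
      module
    have hv' : π ^ (j - 2) • v ∈ PRext R e E F (e + 2 - j) := by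
      rw [mem_PRext_iff_of_add_eq (m := j - 2) (by omega), smul_smul, ← pow_add,
        show e + 2 - j + (j - 2) = e by omega, piX_pow_eq_zero, zero_smul (TruncPoly R e) v]
      exact zero_mem _
    refine mem_sup.mpr ⟨y, hy, π • (w + π ^ (j - 2) • v), mem_map_of_mem (add_mem hw hv'), ?_⟩
    rw [smul_add, smul_smul, ← pow_succ', show j - 2 + 1 = j - 1 by omega, hv]
    abel
  · intro h
    obtain ⟨a, ha, _, ⟨b, hb, rfl⟩, rfl⟩ := mem_sup.mp h
    have ha' := (mem_PRext_iff_of_add_eq (m := j) (by omega)).mp ha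
    have hb' := (mem_PRext_iff_of_add_eq (m := j - 2) (by omega)).mp hb
    rw [smul_add]
    refine add_mem (mem_sup_right ⟨_, ha', ?_⟩) (mem_sup_left ?_)
    · rw [DistribSMul.toLinearMap_apply, smul_smul, h₁]
    · rwa [DistribSMul.toLinearMap_apply, smul_smul, ← pow_succ,
        show e + 1 - j + 1 = e + 2 - j by omega]

noncomputable def quotientPRextEquiv (hF : IsPRFiltration R e E d₁ F) {j : ℕ} (hj1 : 2 ≤ j)
    (hje : j ≤ e) :
    (PRext R e E F (e + 1 - j) ⧸ (PRext R e E F (e - j) ⊔ (PRext R e E F (e + 2 - j)).map πₗ).comap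
        (PRext R e E F (e + 1 - j)).subtype) ≃ₗ[R]
      (F (j - 1) ⧸ (F (j - 2) ⊔ (F j).map πₗ).comap (F (j - 1)).subtype) :=
  let φ : PRext R e E F (e + 1 - j) →ₗ[R] F (j - 1) := (mulPi R e E (e + 1 - j)).restrict
    fun _ hx => (mem_PRext_iff_of_add_eq (by omega)).mp hx
  have hφ : Function.Surjective φ := by
    rintro ⟨y, hy⟩
    obtain ⟨x, hx, rfl⟩ := hF.exists_mem_PRext_pi_pow_smul_eq (k := e + 1 - j) (by omega) hy
    exact ⟨⟨x, hx⟩, rfl⟩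
  (quotEquivOfEq _ _ (by ext; exact (hF.pi_pow_smul_mem_sup_iff hj1 hje).symm)).trans
    (quotientComapEquivOfSurjective φ hφ _)

end IsPRFiltration

end Filtration

theorem primitive_hasse_invariant_duality_general
    (R : Type*) [CommRing R] [IsLocalRing R] (e : ℕ) (h₁ d₁ : ℕ)
    (E : Type*) [AddCommGroup E] [Module (TruncPoly R e) E] [Module R E]
    [IsScalarTower R (TruncPoly R e) E]
    [Module.Free (TruncPoly R e) E]
    (F : ℕ → Submodule R E) (hF : IsPRFiltration R e E d₁ F)
    (j : ℕ) (hj1 : 2 ≤ j) (hje : j ≤ e)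
    (μ : (↥(F j) ⧸ (F (j - 1)).comap (F j).subtype) →ₗ[R]
        (↥(F (j - 1)) ⧸ (F (j - 2)).comap (F (j - 1)).subtype))
    (hμ : ∀ (x : F j) (hx : piX R e • (x : E) ∈ F (j - 1)),
      μ (Submodule.Quotient.mk x) =
        Submodule.Quotient.mk (⟨piX R e • (x : E), hx⟩ : F (j - 1)))
    (μD : (↥(PRext R e E F (e + 2 - j)) ⧸
          (PRext R e E F (e + 1 - j)).comap (PRext R e E F (e + 2 - j)).subtype) →ₗ[R]
        (↥(PRext R e E F (e + 1 - j)) ⧸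
          (PRext R e E F (e - j)).comap (PRext R e E F (e + 1 - j)).subtype))
    (hμD : ∀ (x : PRext R e E F (e + 2 - j))
        (hx : piX R e • (x : E) ∈ PRext R e E F (e + 1 - j)),
      μD (Submodule.Quotient.mk x) =
        Submodule.Quotient.mk (⟨piX R e • (x : E), hx⟩ : PRext R e E F (e + 1 - j)))
    (b₁ : Module.Basis (Fin d₁) R (↥(F j) ⧸ (F (j - 1)).comap (F j).subtype))
    (b₂ : Module.Basis (Fin d₁) R (↥(F (j - 1)) ⧸ (F (j - 2)).comap (F (j - 1)).subtype))
    (b₃ : Module.Basis (Fin (h₁ - d₁)) R (↥(PRext R e E F (e + 2 - j)) ⧸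
        (PRext R e E F (e + 1 - j)).comap (PRext R e E F (e + 2 - j)).subtype))
    (b₄ : Module.Basis (Fin (h₁ - d₁)) R (↥(PRext R e E F (e + 1 - j)) ⧸
        (PRext R e E F (e - j)).comap (PRext R e E F (e + 1 - j)).subtype)) :
    ∃ u : Rˣ,
      (LinearMap.toMatrix b₁ b₂ μ).det = (u : R) * (LinearMap.toMatrix b₃ b₄ μD).det := by
  have hπF : ∀ x ∈ F j, piX R e • x ∈ F (j - 1) := fun x hx =>
    hF.2.2.2.2 (j - 1) (by omega) x (by rwa [Nat.sub_add_cancel (by omega)])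
  have hπG : ∀ x ∈ PRext R e E F (e + 2 - j), piX R e • x ∈ PRext R e E F (e + 1 - j) :=
    fun x hx => hF.pi_smul_mem_PRext (by omega) (by rwa [show e + 1 - j + 1 = e + 2 - j by omega])
  let cokerEquiv :=
    (quotientRangeInducedEquiv (φ := DistribSMul.toLinearMap R E (piX R e)) hπF hμ).trans
      ((hF.quotientPRextEquiv hj1 hje).symm.trans
        (quotientRangeInducedEquiv (φ := DistribSMul.toLinearMap R E (piX R e)) hπG hμD).symm)
  obtain ⟨u, hu⟩ :=
    (associated_det_toMatrix_of_quotient_range_equiv b₁ b₂ b₃ b₄ μ μD cokerEquiv).symm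
  exact ⟨u, by rw [← hu, mul_comm]⟩

/-- **Compatibility of the primitive Hasse invariants with duality:**
`m^{[j]}(G) = m^{[j]}(G^D)` under the canonical isomorphism of determinant lines.
Let `R` be a commutative local ring and fix `2 ≤ j ≤ e`. Multiplication by `π` induces
`μ : F^{[j]}/F^{[j-1]} → F^{[j-1]}/F^{[j-2]}` (finite free of rank `d₁`) and
`μ^D : F^{[2e+2-j]}/F^{[2e+1-j]} → F^{[2e+1-j]}/F^{[2e-j]}` (finite free of rank `h₁-d₁`).
For any choice of bases, the determinants of the matrices of `μ` and `μ^D` differ by a unit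
of `R`; in particular they generate the same ideal. -/
theorem primitive_hasse_invariant_duality
    (R : Type*) [CommRing R] [IsLocalRing R] (e : ℕ) (he : 2 ≤ e) (h₁ d₁ : ℕ)
    (hd : 0 < d₁) (hdh : d₁ < h₁)
    (E : Type*) [AddCommGroup E] [Module (TruncPoly R e) E] [Module R E]
    [IsScalarTower R (TruncPoly R e) E]
    [Module.Finite (TruncPoly R e) E] [Module.Free (TruncPoly R e) E]
    (hrank : Module.finrank (TruncPoly R e) E = h₁)
    (F : ℕ → Submodule R E) (hF : IsPRFiltration R e E d₁ F)
    (j : ℕ) (hj1 : 2 ≤ j) (hje : j ≤ e)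
    (μ : (↥(F j) ⧸ (F (j - 1)).comap (F j).subtype) →ₗ[R]
        (↥(F (j - 1)) ⧸ (F (j - 2)).comap (F (j - 1)).subtype))
    (hμ : ∀ (x : F j) (hx : piX R e • (x : E) ∈ F (j - 1)),
      μ (Submodule.Quotient.mk x) =
        Submodule.Quotient.mk (⟨piX R e • (x : E), hx⟩ : F (j - 1)))
    (μD : (↥(PRext R e E F (e + 2 - j)) ⧸
          (PRext R e E F (e + 1 - j)).comap (PRext R e E F (e + 2 - j)).subtype) →ₗ[R]
        (↥(PRext R e E F (e + 1 - j)) ⧸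
          (PRext R e E F (e - j)).comap (PRext R e E F (e + 1 - j)).subtype))
    (hμD : ∀ (x : PRext R e E F (e + 2 - j))
        (hx : piX R e • (x : E) ∈ PRext R e E F (e + 1 - j)),
      μD (Submodule.Quotient.mk x) =
        Submodule.Quotient.mk (⟨piX R e • (x : E), hx⟩ : PRext R e E F (e + 1 - j)))
    (b₁ : Module.Basis (Fin d₁) R (↥(F j) ⧸ (F (j - 1)).comap (F j).subtype))
    (b₂ : Module.Basis (Fin d₁) R (↥(F (j - 1)) ⧸ (F (j - 2)).comap (F (j - 1)).subtype))
    (b₃ : Module.Basis (Fin (h₁ - d₁)) R (↥(PRext R e E F (e + 2 - j)) ⧸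
        (PRext R e E F (e + 1 - j)).comap (PRext R e E F (e + 2 - j)).subtype))
    (b₄ : Module.Basis (Fin (h₁ - d₁)) R (↥(PRext R e E F (e + 1 - j)) ⧸
        (PRext R e E F (e - j)).comap (PRext R e E F (e + 1 - j)).subtype)) :
    ∃ u : Rˣ,
      (LinearMap.toMatrix b₁ b₂ μ).det = (u : R) * (LinearMap.toMatrix b₃ b₄ μD).det :=
  primitive_hasse_invariant_duality_general R e h₁ d₁ E F hF j hj1 hje μ hμ μD hμD b₁ b₂ b₃ b₄
end

section
/- Let R be a commutative ring, e ≥ 1 an integer, A := R[X]/(X^e), and π the image of X in A. Let E be a finite free A-module, E' an A-module, and V : E → E' an additive map satisfying V(π·x) = π·V(x) for all x ∈ E. Let 0 = F^{[0]} ⊆ F^{[1]} ⊆ ⋯ ⊆ F^{[e]} ⊆ E be a chain of R-submodules with π·F^{[j]} ⊆ F^{[j−1]} for all 1 ≤ j ≤ e, and let 0 = G^{[0]} ⊆ G^{[1]} ⊆ ⋯ ⊆ G^{[e]} ⊆ E' be a chain of R-submodules with π·G^{[j]} ⊆ G^{[j−1]} for all 1 ≤ j ≤ e. Assume V(E) ⊆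 G^{[e]}. Then V(F^{[j]}) ⊆ G^{[j]} for all 0 ≤ j ≤ e. (In the application, V is the Verschiebung of a p-divisible group satisfying the Pappas–Rapoport condition and the chains are the Pappas–Rapoport filtrations; the statement says that the Verschiebung respects the Pappas–Rapoport filtration, so it induces the partial Hasse maps Ha^{[j]} on the graded pieces F^{[j]}/F^{[j−1]} → G^{[j]}/G^{[j−1]}.) -/
/-!
A vector of `F^{[j]}` is killed by `π^j`, which pushes it down the chain to `F^{[0]} = 0`.
In `A = R[X]/(X^e)` the annihilator of `π^j` is `π^{e-j}A`, because `X^j` is a nonzerodivisor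
of `R[X]`; applied coordinatewise in a basis, the kernel of `π^j` on the free module `E` is
`π^{e-j}E`. So `x ∈ F^{[j]}` is `π^{e-j} • y`, and `V x = π^{e-j} • V y` with `V y ∈ G^{[e]}`,
which `π^{e-j}` pushes down to `G^{[j]}`.
-/

theorem pow_smul_mem_of_forall_smul_mem_succ {S M P : Type*} [Monoid S] [MulAction S M]
    [SetLike P M] (a : S) (F : ℕ → P) (n : ℕ)
    (hF : ∀ j < n, ∀ x ∈ F (j + 1), a • x ∈ F j) :
    ∀ m j, j + m ≤ n → ∀ x ∈ F (j + m), a ^ m • x ∈ F j := by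
  intro m
  induction m with
  | zero => intro j _ x hx; simpa using hx
  | succ m ih =>
    intro j hjm x hx
    rw [pow_succ, mul_smul]
    exact ih j (by omega) _ (hF (j + m) (by omega) x hx)

theorem Function.Semiconj.pow_smul {S M N : Type*} [Monoid S] [MulAction S M] [MulAction S N]
    {f : M → N} {a : S} (hf : Function.Semiconj f (a • ·) (a • ·)) (m : ℕ) (x : M) :
    f (a ^ m • x) = a ^ m • f x := by
  simpa only [smul_iterate] using hf.iterate_right m x

theorem Module.Free.exists_eq_smul_of_smul_eq_zero {S M : Type*} [Semiring S] [AddCommMonoid M]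
    [Module S M] [Module.Free S M] {a c : S} (hS : ∀ s, a * s = 0 → ∃ t, s = c * t)
    {x : M} (hx : a • x = 0) : ∃ y, x = c • y := by
  let b := Module.Free.chooseBasis S M
  have hcoord : ∀ i, a * b.repr x i = 0 := fun i => by
    simpa [hx] using (congr($(b.repr.map_smul a x) i)).symm
  choose t ht using fun i => hS _ (hcoord i)
  refine ⟨∑ i ∈ (b.repr x).support, t i • b i, ?_⟩
  conv_lhs => rw [← b.linearCombination_repr x]
  rw [Finsupp.linearCombination_apply, Finsupp.sum, Finset.smul_sum]
  exact Finset.sum_congr rfl fun i _ => by rw [ht i, mul_smul]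

theorem exists_eq_piX_pow_mul_of_piX_pow_mul_eq_zero {R : Type*} [CommRing R] {e j : ℕ}
    (hj : j ≤ e) (a : TruncPoly R e) (ha : piX R e ^ j * a = 0) :
    ∃ b, a = piX R e ^ (e - j) * b := by
  obtain ⟨f, rfl⟩ := Ideal.Quotient.mk_surjective a
  rw [piX, ← map_pow, ← map_mul, Ideal.Quotient.eq_zero_iff_mem,
    Ideal.mem_span_singleton] at ha
  obtain ⟨g, hg⟩ := ha
  refine ⟨Ideal.Quotient.mk _ g, ?_⟩
  rw [piX, ← map_pow, ← map_mul]
  congr 1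
  refine (Polynomial.monic_X_pow j).isRegular.left ?_
  dsimp only
  rw [hg, ← mul_assoc, ← pow_add, Nat.add_sub_cancel' hj]

theorem verschiebung_respects_pappas_rapoport_filtration_general
    (R : Type*) [CommRing R] (e : ℕ)
    (E : Type*) [AddCommGroup E] [Module (TruncPoly R e) E] [Module R E]
    [Module.Free (TruncPoly R e) E]
    (E' : Type*) [AddCommGroup E'] [Module (TruncPoly R e) E'] [Module R E']
    (V : E →+ E') (hV : ∀ x : E, V (piX R e • x) = piX R e • V x)
    (F : ℕ → Submodule R E) (hF0 : F 0 = ⊥)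
    (hFπ : ∀ j < e, ∀ x ∈ F (j + 1), piX R e • x ∈ F j)
    (G : ℕ → Submodule R E')
    (hGπ : ∀ j < e, ∀ x ∈ G (j + 1), piX R e • x ∈ G j)
    (hVE : ∀ x : E, V x ∈ G e) :
    ∀ j ≤ e, ∀ x ∈ F j, V x ∈ G j := by
  intro j hj x hx
  have hkill : piX R e ^ j • x = 0 := by
    simpa [hF0] using pow_smul_mem_of_forall_smul_mem_succ _ F e hFπ j 0 (by omega) x
      (by simpa using hx)
  obtain ⟨y, rfl⟩ := Module.Free.exists_eq_smul_of_smul_eq_zero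
    (exists_eq_piX_pow_mul_of_piX_pow_mul_eq_zero hj) hkill
  rw [Function.Semiconj.pow_smul (f := V) hV]
  exact pow_smul_mem_of_forall_smul_mem_succ _ G e hGπ (e - j) j (by omega) (V y)
    (by simpa [Nat.add_sub_cancel' hj] using hVE y)

/-- **The Verschiebung respects the Pappas–Rapoport filtration.**
Let `A = R[X]/(X^e)`, `π` the image of `X`, `E` a finite free `A`-module, `E'` an `A`-module,
and `V : E → E'` an additive map with `V(π·x) = π·V(x)`. Let `0 = F^{[0]} ⊆ ⋯ ⊆ F^{[e]} ⊆ E`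
and `0 = G^{[0]} ⊆ ⋯ ⊆ G^{[e]} ⊆ E'` be chains of `R`-submodules with `π·F^{[j]} ⊆ F^{[j-1]}`
and `π·G^{[j]} ⊆ G^{[j-1]}`, and assume `V(E) ⊆ G^{[e]}`. Then `V(F^{[j]}) ⊆ G^{[j]}` for all
`0 ≤ j ≤ e`. -/
theorem verschiebung_respects_pappas_rapoport_filtration
    (R : Type*) [CommRing R] (e : ℕ) (he : 1 ≤ e)
    (E : Type*) [AddCommGroup E] [Module (TruncPoly R e) E] [Module R E]
    [IsScalarTower R (TruncPoly R e) E]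
    [Module.Finite (TruncPoly R e) E] [Module.Free (TruncPoly R e) E]
    (E' : Type*) [AddCommGroup E'] [Module (TruncPoly R e) E'] [Module R E']
    [IsScalarTower R (TruncPoly R e) E']
    (V : E →+ E') (hV : ∀ x : E, V (piX R e • x) = piX R e • V x)
    (F : ℕ → Submodule R E) (hF0 : F 0 = ⊥)
    (hFmono : ∀ j < e, F j ≤ F (j + 1))
    (hFπ : ∀ j < e, ∀ x ∈ F (j + 1), piX R e • x ∈ F j)
    (G : ℕ → Submodule R E') (hG0 : G 0 = ⊥)
    (hGmono : ∀ j < e, G j ≤ G (j + 1))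
    (hGπ : ∀ j < e, ∀ x ∈ G (j + 1), piX R e • x ∈ G j)
    (hVE : ∀ x : E, V x ∈ G e) :
    ∀ j ≤ e, ∀ x ∈ F j, V x ∈ G j :=
  verschiebung_respects_pappas_rapoport_filtration_general R e E E' V hV F hF0 hFπ G hGπ hVE
end
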